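/- Let m > 0, ω > 0, and let h satisfy 0 < hω < 2. If H is a real symmetric 2×2 matrix satisfying M_RK4(h)ᵀ · H · M_RK4(h) = H, then H = 0. In other words, the fourth-order Runge–Kutta discretization of the harmonic oscillator conserves no nontrivial quadratic energy function. -/

import Mathlib

/-!
Write `M = MRK4 m ω h = !![a, b; c, a]`, where `b * c < 0`. Then `M P Mᵀ = det M • P` for the
definite form `P = diag (b, -c)`, and `det M = |R(ihω)|²` lies in `(0, 1)` for the RK4 stability
polynomial `R`. If `Mᵀ H M = H`, then `trace (P H)` and `det H` are multiplied by `det M` and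
`(det M)²` respectively, so both vanish; a symmetric `H` of rank at most one is `± w wᵀ`, and
`trace (P H) = ± wᵀ P w = 0` forces `w = 0`.
-/

open Matrix

/-- The fourth-order Runge–Kutta transition matrix for the harmonic oscillator. -/
noncomputable def MRK4 (m ω h : ℝ) : Matrix (Fin 2) (Fin 2) ℝ :=
  !![1 - h ^ 2 * ω ^ 2 / 2 + h ^ 4 * ω ^ 4 / 24, h / m * (1 - h ^ 2 * ω ^ 2 / 6);
     -h * m * ω ^ 2 * (1 - h ^ 2 * ω ^ 2 / 6), 1 - h ^ 2 * ω ^ 2 / 2 + h ^ 4 * ω ^ 4 / 24]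

namespace Matrix

variable {n R : Type*} [Fintype n] [CommRing R]

theorem det_transpose_mul_mul [DecidableEq n] (M H : Matrix n n R) :
    (Mᵀ * H * M).det = M.det ^ 2 * H.det := by
  rw [det_mul, det_mul, det_transpose]
  ring

theorem trace_mul_transpose_mul_mul {M P : Matrix n n R} {d : R} (hP : M * P * Mᵀ = d • P)
    (H : Matrix n n R) : trace (P * (Mᵀ * H * M)) = d * trace (P * H) := by
  rw [← Matrix.mul_assoc, ← Matrix.mul_assoc, trace_mul_comm, ← Matrix.mul_assoc,
    ← Matrix.mul_assoc, hP, smul_mul, trace_smul, smul_eq_mul]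

theorem eq_zero_of_isSymm_of_det_eq_zero_of_trace_eq_zero {u v : ℝ} (huv : 0 < u * v)
    {H : Matrix (Fin 2) (Fin 2) ℝ} (hH : H.IsSymm) (hdet : H.det = 0)
    (htr : trace (!![u, 0; 0, v] * H) = 0) : H = 0 := by
  have hsymm : H 1 0 = H 0 1 := hH.apply 0 1
  simp only [det_fin_two, trace_fin_two, mul_apply, Fin.sum_univ_two, of_apply, cons_val',
    cons_val_zero, cons_val_one, empty_val', cons_val_fin_one, zero_mul,
    add_zero, zero_add, hsymm] at hdet htr
  have hu : u ≠ 0 := by rintro rfl; simp at huv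
  have hsum : (u * H 0 1) ^ 2 + u * v * H 1 1 ^ 2 = 0 := by
    linear_combination u * H 1 1 * htr - u ^ 2 * hdet
  obtain ⟨h01, h11⟩ := (add_eq_zero_iff_of_nonneg (sq_nonneg _)
    (mul_nonneg huv.le (sq_nonneg _))).mp hsum
  simp only [mul_eq_zero, pow_eq_zero_iff two_ne_zero, hu, huv.ne', false_or] at h01 h11
  have h00 : H 0 0 = 0 := by simpa [h11, hu] using htr
  ext i j
  fin_cases i <;> fin_cases j <;> simp [h00, h01, h11, hsymm]

theorem eq_zero_of_transpose_mul_mul_eq_self {M : Matrix (Fin 2) (Fin 2) ℝ}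
    (hdiag : M 0 0 = M 1 1) (hoff : M 0 1 * M 1 0 < 0) (hdet : M.det ^ 2 ≠ 1)
    {H : Matrix (Fin 2) (Fin 2) ℝ} (hH : H.IsSymm) (hinv : Mᵀ * H * M = H) : H = 0 := by
  have hP : M * !![M 0 1, 0; 0, -M 1 0] * Mᵀ = M.det • !![M 0 1, 0; 0, -M 1 0] := by
    ext i j
    fin_cases i <;> fin_cases j <;> simp [det_fin_two, mul_apply, hdiag] <;> ring
  have hdet_ne : M.det ≠ 1 := fun h ↦ hdet (by rw [h, one_pow])
  refine eq_zero_of_isSymm_of_det_eq_zero_of_trace_eq_zero (u := M 0 1) (v := -M 1 0)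
    (by linarith) hH ?_ ?_
  · have h := det_transpose_mul_mul M H
    rw [hinv] at h
    exact (mul_eq_zero.mp (by linear_combination -h : (M.det ^ 2 - 1) * H.det = 0)).resolve_left
      (sub_ne_zero.mpr hdet)
  · have h := trace_mul_transpose_mul_mul hP H
    rw [hinv] at h
    exact (mul_eq_zero.mp (by linear_combination -h :
      (M.det - 1) * trace (!![M 0 1, 0; 0, -M 1 0] * H) = 0)).resolve_left (sub_ne_zero.mpr hdet_ne)

end Matrix

-- `1 - y⁶/72 + y⁸/576 = |R(iy)|²` for the RK4 stability polynomial `R(z) = ∑_{k ≤ 4} zᵏ/k!`.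
theorem det_MRK4 {m : ℝ} (hm : m ≠ 0) (ω h : ℝ) :
    (MRK4 m ω h).det = 1 - (h * ω) ^ 6 / 72 + (h * ω) ^ 8 / 576 := by
  rw [MRK4, det_fin_two_of]
  field_simp
  ring

theorem MRK4_zero_one_mul_one_zero {m : ℝ} (hm : m ≠ 0) (ω h : ℝ) :
    MRK4 m ω h 0 1 * MRK4 m ω h 1 0 = -(h * ω) ^ 2 * (1 - (h * ω) ^ 2 / 6) ^ 2 := by
  simp only [MRK4, of_apply, cons_val', cons_val_zero, cons_val_one, empty_val',
    cons_val_fin_one]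
  field_simp

theorem rk4_stability_mem_Ioo {y : ℝ} (hy₀ : 0 < y) (hy₂ : y < 2) :
    1 - y ^ 6 / 72 + y ^ 8 / 576 ∈ Set.Ioo 0 1 := by
  have hx₀ : 0 < y ^ 2 := by positivity
  have hx₄ : y ^ 2 < 4 := by nlinarith
  have hcube : (y ^ 2) ^ 3 < 64 := by linarith [pow_lt_pow_left₀ hx₄ hx₀.le three_ne_zero]
  constructor <;> nlinarith [pow_pos hx₀ 3]

theorem rk4_no_quadratic_invariant
    (m ω h : ℝ) (hm : 0 < m)
    (hh₁ : 0 < h * ω) (hh₂ : h * ω < 2)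
    (H : Matrix (Fin 2) (Fin 2) ℝ) (hsymm : H.IsSymm)
    (hcons : (MRK4 m ω h)ᵀ * H * MRK4 m ω h = H) :
    H = 0 := by
  obtain ⟨hdet₀, hdet₁⟩ := rk4_stability_mem_Ioo hh₁ hh₂
  refine eq_zero_of_transpose_mul_mul_eq_self rfl ?_ ?_ hsymm hcons
  · rw [MRK4_zero_one_mul_one_zero hm.ne']
    have hfactor : 0 < 1 - (h * ω) ^ 2 / 6 := by nlinarith
    have := mul_pos (pow_pos hh₁ 2) (pow_pos hfactor 2)
    linarith
  · rw [det_MRK4 hm.ne']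
    exact (pow_lt_one₀ hdet₀.le hdet₁ two_ne_zero).ne
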